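/- Let H be a parity-check matrix of an [n,k,d] linear rank-metric code over F_{q^m} with minimum rank distance d = min_i d_i where C_1,…,C_ℓ ⊆ C are linear subcodes (heterogeneous interleaving with a joint supercode). If E ∈ F_{q^m}^{ℓ×n} satisfies rank_{F_q}(E) = rank_{F_{q^m}}(E) = t ≤ d−2 and each row of the codeword matrix lies in its respective subcode C_i ⊆ C, then the codeword matrix is uniquely recoverable from R = C₀ + E: any two such decompositions R = C₁+E₁ = C₂+E₂ with the stated conditions coincide. -/

import Mathlib

/-! The hypothesis `rank_L E₂ = rank_K E₂` says that the `L`-row space of `E₂` is the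
`L`-span of the `K`-row space `W₂` of its expansion. Since `E₂ = E₁ + (X₁ - X₂)`, every
`x ∈ W₂` is then a vector of the `L`-span of `W₁` plus a codeword; that codeword has its
expansion rows in `W₁ + K x`, of dimension `≤ d - 1`, so it vanishes and `x ∈ W₁`. Hence
`X₁ - X₂ = E₂ - E₁` is a codeword with expansion rows in `W₁`, of dimension `≤ d - 2`,
so it is zero. -/

open Matrix

noncomputable def extV {K L : Type} [Field K] [Field L] [Algebra K L]
    {m n : ℕ} (γ : Module.Basis (Fin m) K L) (v : Fin n → L) : Matrix (Fin m) (Fin n) K :=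
  Matrix.of fun i j => γ.repr (v j) i

noncomputable def extM {K L : Type} [Field K] [Field L] [Algebra K L]
    {m n : ℕ} {ι : Type} (γ : Module.Basis (Fin m) K L) (E : Matrix ι (Fin n) L) :
    Matrix (ι × Fin m) (Fin n) K :=
  Matrix.of fun p j => γ.repr (E p.1 j) p.2

section ScalarExtension

variable {K L : Type} [Field K] [Field L] [Algebra K L] {n : ℕ}

noncomputable def algebraMapVec (K L : Type) [Field K] [Field L] [Algebra K L] (n : ℕ) :
    (Fin n → K) →ₗ[K] (Fin n → L) :=
  (Algebra.linearMap K L).compLeft (Fin n)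

lemma comp_algebraMapVec (f : L →ₗ[K] K) (x : Fin n → K) :
    f.compLeft (Fin n) (algebraMapVec K L n x) = f 1 • x := by
  funext j
  simp [algebraMapVec, Algebra.algebraMap_eq_smul_one, mul_comm]

lemma sum_smul_algebraMapVec_extV {m : ℕ} (γ : Module.Basis (Fin m) K L) (v : Fin n → L) :
    ∑ s, γ s • algebraMapVec K L n (extV γ v s) = v := by
  funext j
  conv_rhs => rw [← γ.sum_repr (v j)]
  simp [algebraMapVec, extV, Finset.sum_apply, Algebra.smul_def, mul_comm]

/-- The `L`-subspace of `L^n` spanned by the `K`-subspace `W ≤ K^n`, described without a basis: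
its vectors are those whose image under every `K`-linear functional `L → K` lies in `W`. -/
def scalarExtension (L : Type) [Field L] [Algebra K L] (W : Submodule K (Fin n → K)) :
    Submodule L (Fin n → L) where
  carrier := {v | ∀ f : L →ₗ[K] K, f.compLeft (Fin n) v ∈ W}
  add_mem' {v w} hv hw f := by simpa using W.add_mem (hv f) (hw f)
  zero_mem' f := by simp
  smul_mem' α v hv f := hv (f ∘ₗ LinearMap.mulLeft K α)

lemma scalarExtension_mono {W W' : Submodule K (Fin n → K)} (h : W ≤ W') :
    scalarExtension L W ≤ scalarExtension L W' :=
  fun _ hv f => h (hv f)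

lemma algebraMapVec_mem_scalarExtension_iff {W : Submodule K (Fin n → K)} {x : Fin n → K} :
    algebraMapVec K L n x ∈ scalarExtension L W ↔ x ∈ W := by
  refine ⟨fun hx => ?_, fun hx f => ?_⟩
  · obtain ⟨f, hf⟩ := Module.Projective.exists_dual_eq_one K (one_ne_zero : (1 : L) ≠ 0)
    simpa [comp_algebraMapVec, hf] using hx f
  · rw [comp_algebraMapVec]
    exact W.smul_mem _ hx

lemma mem_scalarExtension_iff_extV {m : ℕ} (γ : Module.Basis (Fin m) K L)
    {W : Submodule K (Fin n → K)} {v : Fin n → L} :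
    v ∈ scalarExtension L W ↔ ∀ s, extV γ v s ∈ W := by
  refine ⟨fun hv s => hv (γ.coord s), fun hv => ?_⟩
  rw [← sum_smul_algebraMapVec_extV γ v]
  exact Submodule.sum_mem _ fun s _ =>
    Submodule.smul_mem _ _ (algebraMapVec_mem_scalarExtension_iff.mpr (hv s))

lemma finrank_scalarExtension_le [Module.Finite K L] (W : Submodule K (Fin n → K)) :
    Module.finrank L (scalarExtension L W) ≤ Module.finrank K W := by
  let b := Module.finBasis K W
  let u : Fin (Module.finrank K W) → Fin n → L := fun i => algebraMapVec K L n (b i)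
  have hW : W = Submodule.span K (Set.range fun i => (b i : Fin n → K)) := by
    conv_lhs => rw [← W.map_subtype_top, ← b.span_eq, Submodule.map_span, ← Set.range_comp]
    rfl
  have hle : scalarExtension L W ≤ Submodule.span L (Set.range u) := by
    intro v hv
    rw [← sum_smul_algebraMapVec_extV (Module.finBasis K L) v]
    refine Submodule.sum_mem _ fun s _ => Submodule.smul_mem _ _ ?_
    have hs := (mem_scalarExtension_iff_extV (Module.finBasis K L)).mp hv s
    rw [hW] at hs
    have hu := Submodule.image_span_subset_span (algebraMapVec K L n) _ ⟨_, hs, rfl⟩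
    rw [← Set.range_comp] at hu
    exact Submodule.span_subset_span K L _ hu
  exact (Submodule.finrank_mono hle).trans ((finrank_range_le_card u).trans (by simp))

lemma scalarExtension_bot [Module.Finite K L] :
    scalarExtension L (⊥ : Submodule K (Fin n → K)) = ⊥ :=
  Submodule.finrank_eq_zero.mp <| Nat.eq_zero_of_le_zero <|
    (finrank_scalarExtension_le ⊥).trans_eq (finrank_bot K _)

section Expansion

variable {m : ℕ} (γ : Module.Basis (Fin m) K L)

lemma rank_extV_le_of_mem_scalarExtension {W : Submodule K (Fin n → K)} {v : Fin n → L}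
    (hv : v ∈ scalarExtension L W) : (extV γ v).rank ≤ Module.finrank K W := by
  rw [rank_eq_finrank_span_row]
  exact Submodule.finrank_mono <| Submodule.span_le.mpr <|
    Set.range_subset_iff.mpr ((mem_scalarExtension_iff_extV γ).mp hv)

lemma row_mem_scalarExtension {ι : Type} (E : Matrix ι (Fin n) L) (i : ι) :
    E i ∈ scalarExtension L (Submodule.span K (Set.range (extM γ E).row)) :=
  (mem_scalarExtension_iff_extV γ).mpr fun s => Submodule.subset_span ⟨(i, s), rfl⟩

lemma eq_zero_of_rank_extM_eq_zero {ι : Type} [Finite ι] {E : Matrix ι (Fin n) L}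
    (h : (extM γ E).rank = 0) : E = 0 := by
  have := Module.Finite.of_basis γ
  rw [rank_eq_finrank_span_row, Submodule.finrank_eq_zero] at h
  have hrow (i : ι) : E i = 0 := by
    simpa [h, scalarExtension_bot] using row_mem_scalarExtension γ E i
  exact funext hrow

lemma span_range_eq_scalarExtension {ι : Type} [Finite ι] {E : Matrix ι (Fin n) L}
    (h : E.rank = (extM γ E).rank) :
    Submodule.span L (Set.range E.row) =
      scalarExtension L (Submodule.span K (Set.range (extM γ E).row)) := by
  have := Module.Finite.of_basis γ
  refine Submodule.eq_of_le_of_finrank_le ?_ ?_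
  · exact Submodule.span_le.mpr (Set.range_subset_iff.mpr (row_mem_scalarExtension γ E))
  · calc _ ≤ Module.finrank K (Submodule.span K (Set.range (extM γ E).row)) :=
          finrank_scalarExtension_le _
      _ = Module.finrank L (Submodule.span L (Set.range E.row)) := by
          rw [← rank_eq_finrank_span_row, ← h, rank_eq_finrank_span_row]

variable {γ} {d : ℕ} {C : Submodule L (Fin n → L)}

lemma eq_zero_of_mem_scalarExtension (hC : ∀ v ∈ C, v ≠ 0 → d ≤ (extV γ v).rank)
    {W : Submodule K (Fin n → K)} (hW : Module.finrank K W < d) {c : Fin n → L} (hc : c ∈ C)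
    (hcW : c ∈ scalarExtension L W) : c = 0 := by
  by_contra hc0
  have hle := rank_extV_le_of_mem_scalarExtension γ hcW
  have hge := hC c hc hc0
  omega

lemma le_of_scalarExtension_le_sup (hC : ∀ v ∈ C, v ≠ 0 → d ≤ (extV γ v).rank)
    {W₁ W₂ : Submodule K (Fin n → K)} (hW₁ : Module.finrank K W₁ + 1 < d)
    (h : scalarExtension L W₂ ≤ scalarExtension L W₁ ⊔ C) : W₂ ≤ W₁ := by
  intro x hx
  have hxW : algebraMapVec K L n x ∈ scalarExtension L (K ∙ x) :=
    algebraMapVec_mem_scalarExtension_iff.mpr (Submodule.mem_span_singleton_self x)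
  obtain ⟨e, he, c, hc, hec⟩ :=
    Submodule.mem_sup.mp (h (algebraMapVec_mem_scalarExtension_iff.mpr hx))
  have hcW : c ∈ scalarExtension L (W₁ ⊔ K ∙ x) := by
    rw [eq_sub_of_add_eq' hec]
    exact sub_mem (scalarExtension_mono le_sup_right hxW) (scalarExtension_mono le_sup_left he)
  have hfin : Module.finrank K ↥(W₁ ⊔ K ∙ x) < d :=
    calc Module.finrank K ↥(W₁ ⊔ K ∙ x) ≤ Module.finrank K W₁ + Module.finrank K (K ∙ x) :=
          Submodule.finrank_add_le_finrank_add_finrank _ _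
      _ ≤ Module.finrank K W₁ + 1 := by
          gcongr; simpa using finrank_span_le_card ({x} : Set (Fin n → K))
      _ < d := hW₁
  rw [eq_zero_of_mem_scalarExtension hC hfin hc hcW, add_zero] at hec
  exact algebraMapVec_mem_scalarExtension_iff.mp (hec ▸ he)

end Expansion

end ScalarExtension

theorem heterogeneous_unique_decoding_general {m n d ℓ : ℕ} (K L : Type) [Field K]
    [Field L] [Algebra K L]
    (γ : Module.Basis (Fin m) K L)
    (C : Submodule L (Fin n → L))
    (hd : ∀ v ∈ C, v ≠ 0 → d ≤ (extV γ v).rank)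
    (Csub : Fin ℓ → Submodule L (Fin n → L)) (hsub : ∀ i, Csub i ≤ C)
    (X₁ X₂ E₁ E₂ : Matrix (Fin ℓ) (Fin n) L)
    (hX₁ : ∀ i, X₁ i ∈ Csub i) (hX₂ : ∀ i, X₂ i ∈ Csub i)
    (hE₁t : (extM γ E₁).rank ≤ d - 2)
    (hE₂full : E₂.rank = (extM γ E₂).rank) (hE₂t : (extM γ E₂).rank ≤ d - 2)
    (hR : X₁ + E₁ = X₂ + E₂) :
    X₁ = X₂ ∧ E₁ = E₂ := by
  rcases Nat.lt_or_ge d 3 with hd3 | hd3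
  · obtain rfl : E₁ = 0 := eq_zero_of_rank_extM_eq_zero γ (by omega)
    obtain rfl : E₂ = 0 := eq_zero_of_rank_extM_eq_zero γ (by omega)
    simpa using hR
  set W₁ := Submodule.span K (Set.range (extM γ E₁).row)
  have hW₁ : Module.finrank K W₁ ≤ d - 2 := rank_eq_finrank_span_row (extM γ E₁) ▸ hE₁t
  have hdiff (i : Fin ℓ) : X₁ i - X₂ i = E₂ i - E₁ i := by
    rw [sub_eq_sub_iff_add_eq_add, add_comm (E₂ i)]
    exact congrFun hR i
  have hW : Submodule.span K (Set.range (extM γ E₂).row) ≤ W₁ := by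
    refine le_of_scalarExtension_le_sup hd (by omega) ?_
    rw [← span_range_eq_scalarExtension γ hE₂full, Submodule.span_le, Set.range_subset_iff]
    intro i
    change E₂ i ∈ _
    rw [← add_sub_cancel (E₁ i) (E₂ i), ← hdiff]
    exact Submodule.add_mem_sup (row_mem_scalarExtension γ E₁ i)
      (sub_mem (hsub i (hX₁ i)) (hsub i (hX₂ i)))
  have hX : X₁ = X₂ := by
    funext i
    refine sub_eq_zero.mp (eq_zero_of_mem_scalarExtension hd (W := W₁) (by omega)
      (sub_mem (hsub i (hX₁ i)) (hsub i (hX₂ i))) ?_)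
    rw [hdiff]
    exact sub_mem (scalarExtension_mono hW (row_mem_scalarExtension γ E₂ i))
      (row_mem_scalarExtension γ E₁ i)
  exact ⟨hX, add_left_cancel (hX ▸ hR)⟩

/-- heterogeneous interleaving with a joint supercode: let `C` be a linear
`[n,k,d]` rank-metric code over `F_{q^m}` containing constituent codes `C₁,…,C_ℓ`, with `d`
its minimum rank distance. If heterogeneous interleaved codewords `X₁, X₂` (the `i`-th row of
`Xⱼ` lying in the `i`-th constituent code) and errors `E₁, E₂`, each satisfying
`rank_{F_q}(Eⱼ) = rank_{F_{q^m}}(Eⱼ) ≤ d - 2`, give the same received word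
`X₁ + E₁ = X₂ + E₂`, then `X₁ = X₂` and `E₁ = E₂`. -/
theorem heterogeneous_unique_decoding {q m n k d ℓ : ℕ} (K L : Type) [Field K] [Fintype K]
    [Field L] [Fintype L] [Algebra K L] (hK : Fintype.card K = q) (hL : Fintype.card L = q ^ m)
    (γ : Module.Basis (Fin m) K L)
    (C : Submodule L (Fin n → L)) (hk : Module.finrank L C = k)
    (hd : ∀ v ∈ C, v ≠ 0 → d ≤ (extV γ v).rank)
    (hd' : ∃ v ∈ C, v ≠ 0 ∧ (extV γ v).rank = d)
    (Csub : Fin ℓ → Submodule L (Fin n → L)) (hsub : ∀ i, Csub i ≤ C)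
    (X₁ X₂ E₁ E₂ : Matrix (Fin ℓ) (Fin n) L)
    (hX₁ : ∀ i, X₁ i ∈ Csub i) (hX₂ : ∀ i, X₂ i ∈ Csub i)
    (hE₁full : E₁.rank = (extM γ E₁).rank) (hE₁t : (extM γ E₁).rank ≤ d - 2)
    (hE₂full : E₂.rank = (extM γ E₂).rank) (hE₂t : (extM γ E₂).rank ≤ d - 2)
    (hR : X₁ + E₁ = X₂ + E₂) :
    X₁ = X₂ ∧ E₁ = E₂ :=
  heterogeneous_unique_decoding_general K L γ C hd Csub hsub X₁ X₂ E₁ E₂ hX₁ hX₂ hE₁t hE₂full hE₂t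
    hR
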